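/- arXiv:math/9908010 — 4 statements merged into one kernel-verified Lean document; each statement's English description precedes it below -/
import Mathlib

section
/- Let A be a ring containing ℚ and P = A[[t]]. For n ≥ 0 let Pₙ = Atⁿ and let Pₙ' be the additive subgroup of Pₙ generated by all commutators [x,y] = xy - yx with x ∈ Pₖ, y ∈ Pₛ, k+s = n. Set P' = Π_{n≥0} Pₙ' ⊆ P and P̄ = P/P'. Then for any X, Y ∈ P₊ = tP, one has log(exp(X)·exp(Y)) - X - Y ∈ P', i.e. the composition W → P → P̄ sending 1+x to the class of log(1+x) is a group homomorphism Log : W → P̄. -/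
set_option linter.unusedSectionVars false
set_option linter.unusedVariables false
set_option maxHeartbeats 1000000


noncomputable section

variable {A : Type*} [Ring A]

/-- Coefficientwise product of (possibly `ρ`-twisted) power series `Σ tⁱ·(f i)`,
where the twisting satisfies `a·t = t·ρ(a)`. -/
def mulF (ρ : A ≃+* A) (f g : ℕ → A) : ℕ → A := fun n =>
  ∑ p ∈ Finset.HasAntidiagonal.antidiagonal n, (⇑ρ)^[p.2] (f p.1) * g p.2

/-- The power series `1`. -/
def oneF : ℕ → A := fun n => if n = 0 then 1 else 0

/-- Powers of a twisted power series. -/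
def powF (ρ : A ≃+* A) (f : ℕ → A) : ℕ → ℕ → A
  | 0 => oneF
  | k + 1 => mulF ρ (powF ρ f k) f

/-- `exp y = Σ_k yᵏ/k!` for `y ∈ P₊`; each coefficient is a finite (t-adically convergent) sum. -/
def expF (ρ : A ≃+* A) [Algebra ℚ A] (y : ℕ → A) : ℕ → A := fun n =>
  ∑ k ∈ Finset.range (n + 1), ((Nat.factorial k : ℚ)⁻¹) • powF ρ y k n

/-- `log (1+x) = Σ_k (-1)^(k-1) xᵏ/k` for `x ∈ P₊`. -/
def logF (ρ : A ≃+* A) [Algebra ℚ A] (x : ℕ → A) : ℕ → A := fun n =>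
  ∑ k ∈ Finset.Icc 1 n, (((-1 : ℚ) ^ (k - 1)) / k) • powF ρ x k n

/-- The degree-`n` part `Pₙ'` of the commutator subgroup `P' = Π Pₙ'`:
the additive subgroup of `A ≅ A·tⁿ` generated by (the `tⁿ`-coefficients of) commutators
`[x, y] = xy - yx` with `x = a·tᵏ ∈ Pₖ`, `y = b·tˢ ∈ Pₛ`, `k + s = n`. -/
def commSubgroup (ρ : A ≃+* A) (n : ℕ) : AddSubgroup A :=
  AddSubgroup.closure {c | ∃ (k s : ℕ) (a b : A), k + s = n ∧
    c = (⇑ρ)^[s] a * b - (⇑ρ)^[k] b * a}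

end

noncomputable section BCH

open Finset

variable {A : Type*} [Ring A] (ρ : A ≃+* A)

/-- `ρ^[q]` as a ring hom. -/
def iterHom : ℕ → (A →+* A)
  | 0 => RingHom.id A
  | q + 1 => (iterHom q).comp ρ.toRingHom

lemma iterHom_apply (q : ℕ) (a : A) : iterHom ρ q a = (⇑ρ)^[q] a := by
  induction q generalizing a with
  | zero => rfl
  | succ q ih => simp [iterHom, Function.iterate_succ_apply, ih]

variable [Algebra ℚ A]

lemma iterHom_ratsmul (q : ℕ) (c : ℚ) (a : A) :
    iterHom ρ q (c • a) = c • iterHom ρ q a := by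
  rw [Algebra.smul_def, map_mul, Algebra.smul_def]
  congr 1
  exact RingHom.congr_fun
    (RingHom.ext_rat ((iterHom ρ q).comp (algebraMap ℚ A)) (algebraMap ℚ A)) c

/-- Type synonym carrying the twisted power series ring structure. -/
def TPS (A : Type*) [Ring A] (ρ : A ≃+* A) : Type _ := ℕ → A

variable {ρ}

def ofF (f : ℕ → A) : TPS A ρ := f

def coef (f : TPS A ρ) (n : ℕ) : A := f n

instance : AddCommGroup (TPS A ρ) := inferInstanceAs (AddCommGroup (ℕ → A))
instance : Module ℚ (TPS A ρ) := inferInstanceAs (Module ℚ (ℕ → A))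
instance : Mul (TPS A ρ) := ⟨fun f g => ofF (mulF ρ f g)⟩
instance : One (TPS A ρ) := ⟨ofF oneF⟩

@[ext] lemma TPS.ext {f g : TPS A ρ} (h : ∀ n, coef f n = coef g n) : f = g := funext h

@[simp] lemma coef_ofF (f : ℕ → A) (n : ℕ) : coef (ofF (ρ := ρ) f) n = f n := rfl
@[simp] lemma coef_add (f g : TPS A ρ) (n : ℕ) : coef (f + g) n = coef f n + coef g n := rfl
@[simp] lemma coef_sub (f g : TPS A ρ) (n : ℕ) : coef (f - g) n = coef f n - coef g n := rfl
@[simp] lemma coef_neg (f : TPS A ρ) (n : ℕ) : coef (-f) n = -coef f n := rfl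
@[simp] lemma coef_zero (n : ℕ) : coef (0 : TPS A ρ) n = 0 := rfl
@[simp] lemma coef_smul (c : ℚ) (f : TPS A ρ) (n : ℕ) : coef (c • f) n = c • coef f n := rfl
@[simp] lemma coef_nsmul (c : ℕ) (f : TPS A ρ) (n : ℕ) : coef (c • f) n = c • coef f n := rfl

lemma coef_one (n : ℕ) : coef (1 : TPS A ρ) n = if n = 0 then 1 else 0 := rfl
@[simp] lemma coef_one_zero : coef (1 : TPS A ρ) 0 = 1 := rfl
lemma coef_one_ne {n : ℕ} (h : n ≠ 0) : coef (1 : TPS A ρ) n = 0 := by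
  rw [coef_one, if_neg h]

lemma coef_mul (f g : TPS A ρ) (n : ℕ) :
    coef (f * g) n = ∑ p ∈ Finset.HasAntidiagonal.antidiagonal n, iterHom ρ p.2 (coef f p.1) * coef g p.2 := by
  show mulF ρ f g n = _
  unfold mulF
  exact Finset.sum_congr rfl fun p _ => by rw [iterHom_apply]; rfl

def coefHom (n : ℕ) : TPS A ρ →+ A where
  toFun f := coef f n
  map_zero' := rfl
  map_add' _ _ := rfl

lemma coef_sum {ι : Type*} (s : Finset ι) (f : ι → TPS A ρ) (n : ℕ) :
    coef (∑ i ∈ s, f i) n = ∑ i ∈ s, coef (f i) n :=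
  map_sum (coefHom n) f s

lemma iterHom_add_apply (q r : ℕ) (a : A) :
    iterHom ρ (q + r) a = iterHom ρ r (iterHom ρ q a) := by
  simp [iterHom_apply, add_comm q r, Function.iterate_add_apply]

instance : Ring (TPS A ρ) where
  __ := (inferInstance : AddCommGroup (TPS A ρ))
  left_distrib f g h := by
    ext n
    simp only [coef_mul, coef_add, mul_add, map_add, add_mul, Finset.sum_add_distrib]
  right_distrib f g h := by
    ext n
    simp only [coef_mul, coef_add, mul_add, map_add, add_mul, Finset.sum_add_distrib]
  zero_mul f := by ext n; simp [coef_mul]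
  mul_zero f := by ext n; simp [coef_mul]
  one_mul f := by
    ext n
    rw [coef_mul, Finset.sum_eq_single (0, n)]
    · simp [coef_one]
    · rintro ⟨p, q⟩ hp hne
      rw [Finset.HasAntidiagonal.mem_antidiagonal] at hp
      have : p ≠ 0 := fun h => hne (by simp [h, ← hp])
      simp [coef_one, this]
    · simp
  mul_one f := by
    ext n
    rw [coef_mul, Finset.sum_eq_single (n, 0)]
    · simp [coef_one, iterHom]
    · rintro ⟨p, q⟩ hp hne
      rw [Finset.HasAntidiagonal.mem_antidiagonal] at hp
      have : q ≠ 0 := fun h => hne (by simp [h, ← hp])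
      simp [coef_one, this]
    · simp
  mul_assoc f g h := by
    ext n
    simp only [coef_mul, Finset.mul_sum, Finset.sum_mul, map_sum, map_mul, Finset.sum_sigma']
    apply Finset.sum_nbij' (fun ⟨⟨_i, j⟩, ⟨k, l⟩⟩ => ⟨(k, l + j), (l, j)⟩)
      (fun ⟨⟨i, _j⟩, ⟨k, l⟩⟩ => ⟨(i + k, l), (i, k)⟩) <;>
      aesop (add simp [add_assoc, mul_assoc, iterHom_add_apply])

instance : IsScalarTower ℚ (TPS A ρ) (TPS A ρ) := ⟨fun c f g => by
  show (c • f) * g = c • (f * g)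
  ext n
  rw [coef_smul, coef_mul, coef_mul, Finset.smul_sum]
  refine Finset.sum_congr rfl fun p _ => ?_
  rw [coef_smul, iterHom_ratsmul, smul_mul_assoc]⟩

instance : SMulCommClass ℚ (TPS A ρ) (TPS A ρ) := ⟨fun c f g => by
  show c • (f * g) = f * (c • g)
  ext n
  rw [coef_smul, coef_mul, coef_mul, Finset.smul_sum]
  refine Finset.sum_congr rfl fun p _ => ?_
  rw [coef_smul, mul_smul_comm]⟩

lemma powF_eq (f : ℕ → A) (k : ℕ) : ofF (powF ρ f k) = (ofF f : TPS A ρ) ^ k := by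
  induction k with
  | zero => rfl
  | succ k ih => rw [pow_succ, ← ih]; rfl

/-- The Euler derivation `t d/dt`. -/
def DF (f : TPS A ρ) : TPS A ρ := ofF fun n => n • coef f n

@[simp] lemma coef_DF (f : TPS A ρ) (n : ℕ) : coef (DF f) n = n • coef f n := rfl

@[simp] lemma coef_DF_zero (f : TPS A ρ) : coef (DF f) 0 = 0 := by simp

lemma DF_add (f g : TPS A ρ) : DF (f + g) = DF f + DF g := by ext n; simp
lemma DF_sub (f g : TPS A ρ) : DF (f - g) = DF f - DF g := by ext n; simp [smul_sub]
lemma DF_one : DF (1 : TPS A ρ) = 0 := by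
  ext n
  cases n <;> simp [coef_one]

lemma DF_mul (f g : TPS A ρ) : DF (f * g) = DF f * g + f * DF g := by
  ext n
  rw [coef_DF, coef_add, coef_mul, coef_mul, coef_mul, Finset.smul_sum,
    ← Finset.sum_add_distrib]
  refine Finset.sum_congr rfl fun p hp => ?_
  rw [Finset.HasAntidiagonal.mem_antidiagonal] at hp
  rw [coef_DF, coef_DF, map_nsmul, smul_mul_assoc, mul_smul_comm, ← add_nsmul, hp]

lemma DF_smul (c : ℚ) (f : TPS A ρ) : DF (c • f) = c • DF f := by
  ext n; simp [smul_comm]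

lemma DF_sum {ι : Type*} (s : Finset ι) (f : ι → TPS A ρ) :
    DF (∑ i ∈ s, f i) = ∑ i ∈ s, DF (f i) := by
  ext n; simp [coef_sum, Finset.smul_sum]

lemma coef_pow_eq_zero {x : TPS A ρ} (hx : coef x 0 = 0) :
    ∀ {k n : ℕ}, n < k → coef (x ^ k) n = 0 := by
  intro k
  induction k with
  | zero => omega
  | succ k ih =>
    intro n hn
    rw [pow_succ, coef_mul]
    refine Finset.sum_eq_zero fun p hp => ?_
    rw [Finset.HasAntidiagonal.mem_antidiagonal] at hp
    rcases Nat.eq_zero_or_pos p.2 with h2 | h2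
    · rw [h2, hx, mul_zero]
    · have : p.1 < k := by omega
      rw [ih this, map_zero, zero_mul]

lemma coef_mul_congr {f f' g g' : TPS A ρ} {n : ℕ}
    (hf : ∀ p ≤ n, coef f p = coef f' p) (hg : ∀ q ≤ n, coef g q = coef g' q) :
    coef (f * g) n = coef (f' * g') n := by
  rw [coef_mul, coef_mul]
  refine Finset.sum_congr rfl fun p hp => ?_
  rw [hf _ (Finset.HasAntidiagonal.antidiagonal.fst_le hp), hg _ (Finset.HasAntidiagonal.antidiagonal.snd_le hp)]

/-- The inverse `(1+x)⁻¹ = Σ (-x)^k`, coefficientwise. -/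
def geomF (x : TPS A ρ) : TPS A ρ :=
  ofF fun n => coef (∑ k ∈ Finset.range (n + 1), (-x) ^ k) n

lemma coef_geomF {x : TPS A ρ} (hx : coef x 0 = 0) {N n : ℕ} (h : n ≤ N) :
    coef (geomF x) n = coef (∑ k ∈ Finset.range (N + 1), (-x) ^ k) n := by
  have hnx : coef (-x) 0 = 0 := by simp [hx]
  show coef (∑ k ∈ Finset.range (n + 1), (-x) ^ k) n = _
  rw [coef_sum, coef_sum]
  refine Finset.sum_subset (by simp; omega) fun k _ hk => ?_
  exact coef_pow_eq_zero hnx (by simp at hk; omega)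

lemma geomF_mul {x : TPS A ρ} (hx : coef x 0 = 0) : geomF x * (1 + x) = 1 := by
  have hnx : coef (-x) 0 = 0 := by simp [hx]
  ext n
  rw [coef_mul_congr (fun p hp => coef_geomF hx hp) (fun q _ => rfl)]
  have key : (∑ k ∈ Finset.range (n + 1), (-x) ^ k) * (1 + x)
      = 1 - (-x) ^ (n + 1) := by
    have := geom_sum_mul (-x) (n + 1)
    have h2 : (-x) - 1 = -(1 + x) := by abel
    rw [h2, mul_neg] at this
    have := neg_eq_iff_eq_neg.mp (this ▸ rfl : -((∑ i ∈ Finset.range (n+1), (-x)^i) * (1+x)) = (-x)^(n+1) - 1)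
    rw [this]; abel
  rw [key, coef_sub, coef_pow_eq_zero hnx (by omega), sub_zero]

lemma mul_geomF {x : TPS A ρ} (hx : coef x 0 = 0) : (1 + x) * geomF x = 1 := by
  have hnx : coef (-x) 0 = 0 := by simp [hx]
  ext n
  rw [coef_mul_congr (g' := (∑ k ∈ Finset.range (n + 1), (-x) ^ k)) (fun p _ => rfl)
    (fun q hq => coef_geomF hx hq)]
  have key : (1 + x) * (∑ k ∈ Finset.range (n + 1), (-x) ^ k)
      = 1 - (-x) ^ (n + 1) := by
    have := mul_geom_sum (-x) (n + 1)
    have h2 : (-x) - 1 = -(1 + x) := by abel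
    rw [h2, neg_mul] at this
    have := neg_eq_iff_eq_neg.mp (this ▸ rfl : -((1+x) * ∑ i ∈ Finset.range (n+1), (-x)^i) = (-x)^(n+1) - 1)
    rw [this]; abel
  rw [key, coef_sub, coef_pow_eq_zero hnx (by omega), sub_zero]

lemma iterate_ratsmul (q : ℕ) (c : ℚ) (a : A) :
    (⇑ρ)^[q] (c • a) = c • (⇑ρ)^[q] a := by
  rw [← iterHom_apply, ← iterHom_apply, iterHom_ratsmul]

lemma commSubgroup_smul_mem {n : ℕ} (c : ℚ) {a : A} (h : a ∈ commSubgroup ρ n) :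
    c • a ∈ commSubgroup ρ n := by
  induction h using AddSubgroup.closure_induction with
  | mem g hg =>
    obtain ⟨k, s, a, b, hks, rfl⟩ := hg
    refine AddSubgroup.subset_closure ⟨k, s, c • a, b, hks, ?_⟩
    rw [smul_sub, iterate_ratsmul, smul_mul_assoc, mul_smul_comm]
  | zero => simpa using (commSubgroup ρ n).zero_mem
  | add x y _ _ hx hy => rw [smul_add]; exact (commSubgroup ρ n).add_mem hx hy
  | neg x _ hx => rw [smul_neg]; exact (commSubgroup ρ n).neg_mem hx

/-- Degreewise membership in `P' = Π Pₙ'`. -/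
def memP (f : TPS A ρ) : Prop := ∀ n, coef f n ∈ commSubgroup ρ n

lemma memP_zero : memP (0 : TPS A ρ) := fun n => by
  simpa using (commSubgroup ρ n).zero_mem

lemma memP.add {f g : TPS A ρ} (hf : memP f) (hg : memP g) : memP (f + g) := fun n => by
  rw [coef_add]; exact (commSubgroup ρ n).add_mem (hf n) (hg n)

lemma memP.neg {f : TPS A ρ} (hf : memP f) : memP (-f) := fun n => by
  rw [coef_neg]; exact (commSubgroup ρ n).neg_mem (hf n)

lemma memP.sub {f g : TPS A ρ} (hf : memP f) (hg : memP g) : memP (f - g) := fun n => by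
  rw [coef_sub]; exact (commSubgroup ρ n).sub_mem (hf n) (hg n)

lemma memP.smul (c : ℚ) {f : TPS A ρ} (hf : memP f) : memP (c • f) := fun n => by
  rw [coef_smul]; exact commSubgroup_smul_mem c (hf n)

lemma memP_sum {ι : Type*} {s : Finset ι} {f : ι → TPS A ρ}
    (h : ∀ i ∈ s, memP (f i)) : memP (∑ i ∈ s, f i) := fun n => by
  rw [coef_sum]; exact AddSubgroup.sum_mem _ fun i hi => h i hi n

lemma memP_commutator (f g : TPS A ρ) : memP (f * g - g * f) := by
  intro n
  rw [coef_sub, coef_mul, coef_mul]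
  rw [show (∑ p ∈ Finset.HasAntidiagonal.antidiagonal n, iterHom ρ p.2 (coef g p.1) * coef f p.2)
      = ∑ p ∈ Finset.HasAntidiagonal.antidiagonal n, iterHom ρ p.1 (coef g p.2) * coef f p.1 from
    (Finset.Nat.sum_antidiagonal_swap (f := fun p => iterHom ρ p.2 (coef g p.1) * coef f p.2)).symm]
  rw [← Finset.sum_sub_distrib]
  refine AddSubgroup.sum_mem _ fun p hp => ?_
  rw [Finset.HasAntidiagonal.mem_antidiagonal] at hp
  exact AddSubgroup.subset_closure
    ⟨p.1, p.2, coef f p.1, coef g p.2, hp, by rw [iterHom_apply, iterHom_apply]⟩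

lemma DF_pow (x : TPS A ρ) (k : ℕ) :
    DF (x ^ (k + 1)) = ∑ i ∈ Finset.range (k + 1), x ^ i * DF x * x ^ (k - i) := by
  induction k with
  | zero => simp
  | succ k ih =>
    rw [pow_succ, DF_mul, ih, Finset.sum_range_succ (n := k + 1), Finset.sum_mul]
    congr 1
    · refine Finset.sum_congr rfl fun i hi => ?_
      rw [Finset.mem_range] at hi
      rw [mul_assoc (x ^ i * DF x), ← pow_succ]
      congr 2
      omega
    · rw [Nat.sub_self, pow_zero, mul_one]

lemma memP_G_DF_pow {G x : TPS A ρ} (hG : G * x = x * G) (k : ℕ) :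
    memP (G * DF (x ^ (k + 1)) - (k + 1) • (G * (x ^ k * DF x))) := by
  have hGc : Commute G x := hG
  rw [DF_pow, Finset.mul_sum,
    show (k + 1) • (G * (x ^ k * DF x)) = ∑ _i ∈ Finset.range (k + 1), G * (x ^ k * DF x) by
      rw [Finset.sum_const, Finset.card_range],
    ← Finset.sum_sub_distrib]
  refine memP_sum fun i hi => ?_
  rw [Finset.mem_range] at hi
  have hik : i ≤ k := by omega
  set Q := G * (x ^ i * DF x) with hQ
  have e1 : G * (x ^ i * DF x * x ^ (k - i)) = Q * x ^ (k - i) := by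
    rw [hQ]; noncomm_ring
  have e2 : x ^ (k - i) * Q = G * (x ^ k * DF x) := by
    calc x ^ (k - i) * Q = (x ^ (k - i) * G) * (x ^ i * DF x) := by rw [hQ, mul_assoc]
      _ = (G * x ^ (k - i)) * (x ^ i * DF x) := by rw [(hGc.pow_right (k - i)).eq]
      _ = G * (x ^ (k - i) * x ^ i * DF x) := by noncomm_ring
      _ = G * (x ^ k * DF x) := by rw [← pow_add]; congr 3; omega
  rw [e1, ← e2]
  exact memP_commutator Q (x ^ (k - i))

lemma memP_DF_pow (x : TPS A ρ) (j : ℕ) :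
    memP (DF (x ^ (j + 1)) - (j + 1) • (x ^ j * DF x)) := by
  simpa [one_mul] using memP_G_DF_pow (G := 1) (x := x) (by rw [one_mul, mul_one]) j

/-- `log` as an operation on `TPS`. -/
def Lg (x : TPS A ρ) : TPS A ρ := ofF (logF ρ x)

lemma coef_Lg (x : TPS A ρ) (n : ℕ) :
    coef (Lg x) n = ∑ k ∈ Finset.Icc 1 n, (((-1 : ℚ) ^ (k - 1)) / k) • coef (x ^ k) n := by
  show logF ρ x n = _
  unfold logF
  refine Finset.sum_congr rfl fun k _ => ?_
  rw [show powF ρ x k n = coef (x ^ k) n from congrFun (powF_eq x k) n]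

@[simp] lemma coef_Lg_zero (x : TPS A ρ) : coef (Lg x) 0 = 0 := by simp [coef_Lg]

lemma coef_mul_eq_zero {f g : TPS A ρ} {n : ℕ} (hf : ∀ p < n, coef f p = 0)
    (hg : coef g 0 = 0) : coef (f * g) n = 0 := by
  rw [coef_mul]
  refine Finset.sum_eq_zero fun p hp => ?_
  rw [Finset.HasAntidiagonal.mem_antidiagonal] at hp
  rcases Nat.eq_zero_or_pos p.2 with h2 | h2
  · rw [h2, hg, mul_zero]
  · rw [hf p.1 (by omega), map_zero, zero_mul]

lemma dlog {x : TPS A ρ} (hx : coef x 0 = 0) : memP (DF (Lg x) - geomF x * DF x) := by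
  intro n
  have hL : coef (DF (Lg x)) n
      = ∑ i ∈ Finset.range n, (((-1 : ℚ) ^ i) / (i + 1)) • coef (DF (x ^ (i + 1))) n := by
    rw [coef_DF, coef_Lg, Finset.smul_sum,
      show Finset.Icc 1 n = Finset.Ico 1 (n + 1) from (Finset.Ico_add_one_right_eq_Icc 1 n).symm,
      Finset.sum_Ico_eq_sum_range]
    refine Finset.sum_congr rfl fun i hi => ?_
    rw [coef_DF, ← Nat.cast_smul_eq_nsmul ℚ n, ← Nat.cast_smul_eq_nsmul ℚ n, smul_smul,
      smul_smul, Nat.add_comm 1 i, Nat.add_sub_cancel]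
    congr 1
    push_cast
    ring
  have hR : coef (geomF x * DF x) n
      = ∑ i ∈ Finset.range n, ((-1 : ℚ) ^ i) • coef (x ^ i * DF x) n := by
    rw [coef_mul_congr (fun p hp => coef_geomF hx hp) (fun q _ => rfl), Finset.sum_mul,
      coef_sum, Finset.sum_range_succ,
      coef_mul_eq_zero (fun p hp => coef_pow_eq_zero (by simp [hx]) hp) (by simp),
      add_zero]
    refine Finset.sum_congr rfl fun i _ => ?_
    rw [show (-x) ^ i = ((-1 : ℚ) ^ i) • x ^ i by rw [← smul_pow, neg_one_smul],
      smul_mul_assoc, coef_smul]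
  rw [coef_sub, hL, hR, ← Finset.sum_sub_distrib]
  refine AddSubgroup.sum_mem _ fun i _ => ?_
  have h1 := commSubgroup_smul_mem (((-1 : ℚ) ^ i) / (i + 1)) (memP_DF_pow x i n)
  rw [coef_sub, smul_sub, coef_nsmul, ← Nat.cast_smul_eq_nsmul ℚ, smul_smul] at h1
  have harith : ((-1 : ℚ) ^ i) / (i + 1) * ((i : ℚ) + 1) = (-1 : ℚ) ^ i := by
    field_simp
  rw [show ((((i : ℕ) + 1 : ℕ) : ℚ)) = ((i : ℚ) + 1) by push_cast; ring, harith] at h1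
  exact h1

lemma coef_mul_zero (f g : TPS A ρ) : coef (f * g) 0 = coef f 0 * coef g 0 := by
  rw [coef_mul, Finset.Nat.antidiagonal_zero, Finset.sum_singleton]
  rfl

/-- To prove degreewise membership, it is enough after applying the Euler derivation
(in degree `0` it must be checked directly). -/
lemma memP_of_DF {f : TPS A ρ} (h0 : coef f 0 ∈ commSubgroup ρ 0) (hD : memP (DF f)) :
    memP f := by
  intro n
  cases n with
  | zero => exact h0
  | succ m =>
    have h1 := hD (m + 1)
    rw [coef_DF, ← Nat.cast_smul_eq_nsmul ℚ] at h1
    have h2 := commSubgroup_smul_mem (((m : ℚ) + 1)⁻¹) h1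
    rw [smul_smul, show (((m + 1 : ℕ) : ℚ)) = ((m : ℚ) + 1) by push_cast; ring,
      inv_mul_cancel₀ (by positivity), one_smul] at h2
    exact h2

lemma key_memP {w v : TPS A ρ} (hw : coef w 0 = 1) (hv : coef v 0 = 1) :
    memP (geomF (w * v - 1) * DF (w * v - 1)
      - geomF (w - 1) * DF (w - 1) - geomF (v - 1) * DF (v - 1)) := by
  set x := w - 1 with hxdef
  set y := v - 1 with hydef
  set z := w * v - 1 with hzdef
  have hx : coef x 0 = 0 := by simp [hxdef, hw]
  have hy : coef y 0 = 0 := by simp [hydef, hv]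
  have hz : coef z 0 = 0 := by simp [hzdef, coef_mul_zero, hw, hv]
  have hwx : (1 : TPS A ρ) + x = w := by rw [hxdef]; abel
  have hvy : (1 : TPS A ρ) + y = v := by rw [hydef]; abel
  have hwvz : (1 : TPS A ρ) + z = w * v := by rw [hzdef]; abel
  set Gx := geomF x
  set Gy := geomF y
  set Gz := geomF z
  have e1 : Gx * w = 1 := by rw [← hwx]; exact geomF_mul hx
  have e2 : w * Gx = 1 := by rw [← hwx]; exact mul_geomF hx
  have e3 : Gy * v = 1 := by rw [← hvy]; exact geomF_mul hy
  have e4 : v * Gy = 1 := by rw [← hvy]; exact mul_geomF hy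
  have e5 : Gz * (w * v) = 1 := by rw [← hwvz]; exact geomF_mul hz
  have e6 : (w * v) * (Gy * Gx) = 1 := by
    rw [mul_assoc w v, ← mul_assoc v Gy, e4, one_mul, e2]
  have hGz : Gz = Gy * Gx := left_inv_eq_right_inv e5 e6
  have hDFz : DF z = DF x * v + w * DF y := by
    rw [hzdef, hxdef, hydef, DF_sub, DF_one, DF_mul, sub_zero]
    rw [DF_sub, DF_sub, DF_one, sub_zero, sub_zero]
  set Q := Gy * (Gx * DF x) with hQ
  have hA : (Gy * Gx) * (DF x * v) = Q * v := by rw [hQ]; noncomm_ring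
  have hB : (Gy * Gx) * (w * DF y) = Gy * ((Gx * w) * DF y) := by noncomm_ring
  have h7 : Gz * DF z = Q * v + Gy * DF y := by
    rw [hGz, hDFz, mul_add, hA, hB, e1, one_mul]
  have h8 : v * Q = Gx * DF x := by
    rw [hQ, ← mul_assoc, e4, one_mul]
  have h9 : Gz * DF z - Gx * DF x - Gy * DF y = Q * v - v * Q := by
    rw [h7, h8]
    abel
  rw [h9]
  exact memP_commutator Q v

lemma part2' {w v : TPS A ρ} (hw : coef w 0 = 1) (hv : coef v 0 = 1) :
    memP (Lg (w * v - 1) - Lg (w - 1) - Lg (v - 1)) := by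
  have hx : coef (w - 1) 0 = 0 := by simp [hw]
  have hy : coef (v - 1) 0 = 0 := by simp [hv]
  have hz : coef (w * v - 1) 0 = 0 := by simp [coef_mul_zero, hw, hv]
  apply memP_of_DF
  · simp only [coef_sub, coef_Lg_zero, sub_zero, sub_self]
    exact zero_mem _
  · rw [DF_sub, DF_sub]
    have hd1 := dlog hz
    have hd2 := dlog hx
    have hd3 := dlog hy
    have hk := key_memP hw hv
    have hcomb := ((hd1.sub hd2).sub hd3).add hk
    rw [show DF (Lg (w * v - 1)) - geomF (w * v - 1) * DF (w * v - 1)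
        - (DF (Lg (w - 1)) - geomF (w - 1) * DF (w - 1))
        - (DF (Lg (v - 1)) - geomF (v - 1) * DF (v - 1))
        + (geomF (w * v - 1) * DF (w * v - 1) - geomF (w - 1) * DF (w - 1)
          - geomF (v - 1) * DF (v - 1))
        = DF (Lg (w * v - 1)) - DF (Lg (w - 1)) - DF (Lg (v - 1)) by abel] at hcomb
    exact hcomb

lemma logexp {X : TPS A ρ} (hX : coef X 0 = 0) :
    memP (Lg (ofF (expF ρ X) - 1) - X) := by
  set E : TPS A ρ := ofF (expF ρ X) with hE
  have coefE : ∀ n, coef E n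
      = ∑ k ∈ Finset.range (n + 1), ((k.factorial : ℚ)⁻¹) • coef (X ^ k) n := by
    intro n
    show expF ρ X n = _
    unfold expF
    exact Finset.sum_congr rfl fun k _ => by
      rw [show powF ρ X k n = coef (X ^ k) n from congrFun (powF_eq X k) n]
  have hE0 : coef E 0 = 1 := by
    rw [coefE]
    simp
  set TT : ℕ → TPS A ρ :=
    fun N => ∑ k ∈ Finset.range (N + 1), ((k.factorial : ℚ)⁻¹) • X ^ k with hTT
  have claimA : ∀ N p, p ≤ N → coef E p = coef (TT N) p := by
    intro N p hp
    rw [coefE, hTT]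
    simp only [coef_sum, coef_smul]
    refine Finset.sum_subset (by intro k hk; simp at hk ⊢; omega) fun k hk hk2 => ?_
    rw [coef_pow_eq_zero hX (by simp at hk2; omega), smul_zero]
  have hEX : E * X = X * E := by
    ext n
    have h1 : coef (E * X) n = coef (TT n * X) n :=
      coef_mul_congr (fun p hp => claimA n p hp) (fun q _ => rfl)
    have h2 : coef (X * E) n = coef (X * TT n) n :=
      coef_mul_congr (fun p _ => rfl) (fun q hq => claimA n q hq)
    have h3 : TT n * X = X * TT n := by
      rw [hTT]
      simp only
      rw [Finset.sum_mul, Finset.mul_sum]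
      refine Finset.sum_congr rfl fun k _ => ?_
      rw [smul_mul_assoc, mul_smul_comm, ← pow_succ, ← pow_succ']
    rw [h1, h3, ← h2]
  set e : TPS A ρ := E - 1 with he
  have he0 : coef e 0 = 0 := by simp [he, hE0]
  have hEe : (1 : TPS A ρ) + e = E := by rw [he]; abel
  set G := geomF e with hG
  have gE : G * E = 1 := by rw [← hEe]; exact geomF_mul he0
  have Eg : E * G = 1 := by rw [← hEe]; exact mul_geomF he0
  have hGX : G * X = X * G := by
    calc G * X = G * X * (E * G) := by rw [Eg, mul_one]
      _ = G * (X * E) * G := by noncomm_ring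
      _ = G * (E * X) * G := by rw [hEX]
      _ = (G * E) * (X * G) := by noncomm_ring
      _ = X * G := by rw [gE, one_mul]
  have hDFe : DF e = DF E := by rw [he, DF_sub, DF_one, sub_zero]
  apply memP_of_DF
  · simp only [coef_sub, coef_Lg_zero, hX, sub_zero, sub_self]
    exact zero_mem _
  rw [DF_sub]
  have hd := dlog he0
  have main : memP (G * DF e - DF X) := by
    intro n
    cases n with
    | zero =>
      rw [coef_sub, coef_mul_zero, coef_DF_zero, coef_DF_zero, mul_zero, sub_zero]
      exact zero_mem _
    | succ m =>
      set n := m + 1 with hn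
      set U : ℕ → TPS A ρ :=
        fun k => (((k.factorial : ℚ))⁻¹ * k) • (G * (X ^ (k - 1) * DF X)) with hU
      set V : TPS A ρ := ∑ k ∈ Finset.range (n + 1), U k with hV
      have s1 : coef (G * DF E) n = coef (G * DF (TT n)) n :=
        coef_mul_congr (fun p _ => rfl)
          (fun q hq => by rw [coef_DF, coef_DF, claimA n q hq])
      have sTT : G * DF (TT n)
          = ∑ k ∈ Finset.range (n + 1), ((k.factorial : ℚ)⁻¹) • (G * DF (X ^ k)) := by
        rw [hTT]
        simp only
        rw [DF_sum, Finset.mul_sum]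
        exact Finset.sum_congr rfl fun k _ => by rw [DF_smul, mul_smul_comm]
      have s3 : memP (G * DF (TT n) - V) := by
        rw [sTT, hV, ← Finset.sum_sub_distrib]
        refine memP_sum fun k _ => ?_
        match k with
        | 0 =>
          rw [hU]
          simp only [pow_zero, DF_one, mul_zero, smul_zero, Nat.cast_zero, zero_smul,
            Nat.factorial_zero]
          show memP (0 - 0)
          simpa using memP_zero (A := A) (ρ := ρ)
        | (j + 1) =>
          have hmj := memP.smul ((((j + 1).factorial : ℚ))⁻¹) (memP_G_DF_pow hGX j)
          rw [smul_sub, ← Nat.cast_smul_eq_nsmul ℚ, smul_smul] at hmj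
          rw [hU]
          simp only [Nat.add_sub_cancel]
          exact hmj
      have s4 : V = G * (TT m * DF X) := by
        rw [hV, Finset.sum_range_succ']
        have hU0 : U 0 = 0 := by
          rw [hU]; simp
        rw [hU0, add_zero, hTT]
        simp only
        rw [Finset.sum_mul, Finset.mul_sum]
        refine Finset.sum_congr rfl fun j _ => ?_
        rw [hU]
        simp only [Nat.add_sub_cancel]
        rw [smul_mul_assoc, mul_smul_comm]
        congr 1
        rw [Nat.factorial_succ]
        push_cast
        field_simp
      have s5 : coef (G * (TT m * DF X)) n = coef (G * (E * DF X)) n := by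
        refine coef_mul_congr (fun p _ => rfl) fun q hq => ?_
        rw [coef_mul, coef_mul]
        refine Finset.sum_congr rfl fun p hp => ?_
        rw [Finset.HasAntidiagonal.mem_antidiagonal] at hp
        rcases Nat.eq_zero_or_pos p.2 with h2 | h2
        · rw [h2, coef_DF_zero, mul_zero, mul_zero]
        · rw [claimA m p.1 (by omega)]
      have s6 : G * (E * DF X) = DF X := by rw [← mul_assoc, gE, one_mul]
      have E2 : coef V n = coef (DF X) n := by rw [s4, s5, s6]
      have : coef (G * DF e - DF X) n = coef (G * DF (TT n) - V) n := by
        rw [coef_sub, coef_sub, hDFe, s1, E2]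
      rw [this]
      exact s3 n
  have hcomb := hd.add main
  rw [show DF (Lg e) - G * DF e + (G * DF e - DF X) = DF (Lg e) - DF X by abel] at hcomb
  exact hcomb

lemma expF_zero (y : ℕ → A) : expF ρ y 0 = 1 := by
  unfold expF
  rw [Finset.sum_range_one]
  show (((0).factorial : ℚ))⁻¹ • (oneF 0 : A) = 1
  simp [oneF]

theorem stmt_2' {A : Type*} [Ring A] [Algebra ℚ A] (ρ : A ≃+* A) :
    (∀ X Y : ℕ → A, X 0 = 0 → Y 0 = 0 → ∀ n : ℕ,
      logF ρ (fun m => mulF ρ (expF ρ X) (expF ρ Y) m - oneF m) n - X n - Y n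
        ∈ commSubgroup ρ n) ∧
    (∀ w v : ℕ → A, w 0 = 1 → v 0 = 1 → ∀ n : ℕ,
      logF ρ (fun m => mulF ρ w v m - oneF m) n
        - logF ρ (fun m => w m - oneF m) n - logF ρ (fun m => v m - oneF m) n
        ∈ commSubgroup ρ n) := by
  constructor
  · intro X Y hX hY n
    have hEx0 : coef (ofF (ρ := ρ) (expF ρ X)) 0 = 1 := expF_zero X
    have hEy0 : coef (ofF (ρ := ρ) (expF ρ Y)) 0 = 1 := expF_zero Y
    have hX' : coef (ofF (ρ := ρ) X) 0 = 0 := hX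
    have hY' : coef (ofF (ρ := ρ) Y) 0 = 0 := hY
    have hlx := logexp hX'
    have hly := logexp hY'
    have hr1 : (ofF (ρ := ρ) (expF ρ (ofF (ρ := ρ) X))) = ofF (expF ρ X) := rfl
    have hr2 : (ofF (ρ := ρ) (expF ρ (ofF (ρ := ρ) Y))) = ofF (expF ρ Y) := rfl
    rw [hr1] at hlx
    rw [hr2] at hly
    have total := ((part2' hEx0 hEy0).add hlx).add hly
    rw [show (Lg (ofF (ρ := ρ) (expF ρ X) * ofF (expF ρ Y) - 1)
          - Lg (ofF (expF ρ X) - 1) - Lg (ofF (expF ρ Y) - 1))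
        + (Lg (ofF (expF ρ X) - 1) - ofF X)
        + (Lg (ofF (expF ρ Y) - 1) - ofF Y)
        = Lg (ofF (expF ρ X) * ofF (expF ρ Y) - 1) - ofF X - ofF Y by
      abel] at total
    exact total n
  · intro w v hw hv n
    exact part2' (w := ofF w) (v := ofF v) hw hv n

end BCH

/-- (Baker–Campbell–Hausdorff.) For `X, Y ∈ P₊ = tP ⊆ P = A[[t]]`,
`log(exp X · exp Y) - X - Y ∈ P'` (degreewise, each degree-`n` component lies in `Pₙ'`);
equivalently, the map `Log : W → P̄ = P/P'`, `1+x ↦ [log(1+x)]`, is a group homomorphism. -/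
theorem stmt_2 {A : Type*} [Ring A] [Algebra ℚ A] (ρ : A ≃+* A) :
    (∀ X Y : ℕ → A, X 0 = 0 → Y 0 = 0 → ∀ n : ℕ,
      logF ρ (fun m => mulF ρ (expF ρ X) (expF ρ Y) m - oneF m) n - X n - Y n
        ∈ commSubgroup ρ n) ∧
    (∀ w v : ℕ → A, w 0 = 1 → v 0 = 1 → ∀ n : ℕ,
      logF ρ (fun m => mulF ρ w v m - oneF m) n
        - logF ρ (fun m => w m - oneF m) n - logF ρ (fun m => v m - oneF m) n
        ∈ commSubgroup ρ n) :=
  stmt_2' ρ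
end

section
/- Let G be a group, ξ : G → ℤ an epimorphism, H = ker ξ, and fix t ∈ G with ξ(t) = -1. Let Γₙ be the set of conjugacy classes of G contained in ξ⁻¹(n). For the twisted power series ring P = (ℚH)_ρ[[t]] with ρ(x) = t⁻¹xt, and the quotient P̄ₙ = Pₙ/Pₙ' (where Pₙ' is generated by commutators of complementary degrees, allowing negative degrees taken in the Laurent ring R = (ℚH)_ρ((t))), there is for each n > 0 a natural isomorphism of ℚ-vector spaces P̄ₙ ≅ ℚΓ₋ₙ, the ℚ-vector space freely spanned by the conjugacy classes of G lying in ξ⁻¹(-n). -/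
noncomputable section

variable {G : Type*} [Group G]

/-- `Pₙ ≅ ℚ·ξ⁻¹(n)`: the ℚ-vector space with basis the elements of `G` of ξ-degree `n`
(the coefficient space of the degree part `(ℚH)·t^(-n)` of `P = (ℚH)_ρ[[t]]`,
under `t^(-n)h ↦ t^(-n)·h`, `ξ(t) = -1`). -/
def degPart (ξ : G → ℤ) (n : ℤ) : Type _ := {g : G // ξ g = n} →₀ ℚ

instance (ξ : G → ℤ) (n : ℤ) : AddCommGroup (degPart ξ n) := inferInstanceAs (AddCommGroup ({g : G // ξ g = n} →₀ ℚ))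
instance (ξ : G → ℤ) (n : ℤ) : Module ℚ (degPart ξ n) := inferInstanceAs (Module ℚ ({g : G // ξ g = n} →₀ ℚ))

/-- The image of `Pₙ'` in `degPart ξ n`: the span of coefficients of commutators
`[x, y] = xy - yx` with `x = g₁ ∈ Pₖ`, `y = g₂ ∈ Pₛ`, i.e. `ξ g₁ = -k ≤ 0`,
`ξ g₂ = -s ≤ 0`, `ξ g₁ + ξ g₂ = n`. -/
def commSpan (ξ : G → ℤ) (n : ℤ) : Submodule ℚ (degPart ξ n) :=
  Submodule.span ℚ {v | ∃ (g₁ g₂ : G) (h : ξ (g₁ * g₂) = n) (h' : ξ (g₂ * g₁) = n),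
    ξ g₁ ≤ 0 ∧ ξ g₂ ≤ 0 ∧ ξ g₁ + ξ g₂ = n ∧
    v = Finsupp.single ⟨g₁ * g₂, h⟩ 1 - Finsupp.single ⟨g₂ * g₁, h'⟩ 1}

/-- The subspace by which one divides to obtain `ℚΓₙ`: the span of differences
`g - hgh⁻¹` of conjugate elements of ξ-degree `n`; the quotient is the ℚ-vector space
freely spanned by the conjugacy classes of `G` contained in `ξ⁻¹(n)`. -/
def conjSpan (ξ : G → ℤ) (n : ℤ) : Submodule ℚ (degPart ξ n) :=
  Submodule.span ℚ {v | ∃ (g h : G) (hg : ξ g = n) (hg' : ξ (h * g * h⁻¹) = n),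
    v = Finsupp.single ⟨g, hg⟩ 1 - Finsupp.single ⟨h * g * h⁻¹, hg'⟩ 1}

end

section Aux

variable {G : Type*} [Group G]

private lemma single_congr {ξ : G → ℤ} {n : ℤ} {a b : G} (ha : ξ a = n) (hb : ξ b = n)
    (h : a = b) :
    (Finsupp.single ⟨a, ha⟩ 1 : degPart ξ n) = Finsupp.single ⟨b, hb⟩ 1 := by
  subst h; rfl

variable {ξ : G → ℤ} (hξ : ∀ a b : G, ξ (a * b) = ξ a + ξ b)

include hξ

private lemma xi_one : ξ 1 = 0 := by
  have := hξ 1 1; simpa using this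

private lemma xi_inv (a : G) : ξ a⁻¹ = - ξ a := by
  have h := hξ a a⁻¹
  rw [mul_inv_cancel, xi_one hξ] at h
  omega

/-- the key predicate: conjugation by `h` acts trivially modulo `commSpan`. -/
private def ConjTriv (ξ : G → ℤ) (n : ℤ) (h : G) : Prop :=
  ∀ (g : G) (hg : ξ g = n) (hg' : ξ (h * g * h⁻¹) = n),
    (Finsupp.single ⟨g, hg⟩ 1 - Finsupp.single ⟨h * g * h⁻¹, hg'⟩ 1 : degPart ξ n)
      ∈ commSpan ξ n

private lemma xi_conj (h g : G) : ξ (h * g * h⁻¹) = ξ g := by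
  rw [hξ, hξ, xi_inv hξ]; omega

private lemma conjTriv_base {n : ℤ} (h : G) (hh1 : n ≤ ξ h) (hh2 : ξ h ≤ 0) :
    ConjTriv ξ n h := by
  intro g hg hg'
  have h1 : ξ (h * (g * h⁻¹)) = n := by rw [hξ, hξ, xi_inv hξ]; omega
  have h2 : ξ ((g * h⁻¹) * h) = n := by rw [hξ, hξ, xi_inv hξ]; omega
  have hmem : (Finsupp.single ⟨h * (g * h⁻¹), h1⟩ 1
      - Finsupp.single ⟨(g * h⁻¹) * h, h2⟩ 1 : degPart ξ n) ∈ commSpan ξ n := by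
    apply Submodule.subset_span
    refine ⟨h, g * h⁻¹, h1, h2, hh2, ?_, ?_, rfl⟩
    · rw [hξ, xi_inv hξ]; omega
    · rw [hξ, xi_inv hξ]; omega
  rw [single_congr h1 hg' (by group), single_congr h2 hg (by group)] at hmem
  have := neg_mem hmem
  convert this using 1
  exact (neg_sub _ _).symm

private lemma conjTriv_one {n : ℤ} : ConjTriv ξ n 1 := by
  intro g hg hg'
  rw [single_congr hg hg' (by group)]
  convert Submodule.zero_mem (commSpan ξ n) using 1
  exact sub_self _

private lemma conjTriv_mul {n : ℤ} {a b : G} (ha : ConjTriv ξ n a) (hb : ConjTriv ξ n b) :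
    ConjTriv ξ n (a * b) := by
  intro g hg hg'
  have hbg : ξ (b * g * b⁻¹) = n := by rw [xi_conj hξ]; exact hg
  have habg : ξ (a * (b * g * b⁻¹) * a⁻¹) = n := by rw [xi_conj hξ]; exact hbg
  have key := add_mem (hb g hg hbg) (ha (b * g * b⁻¹) hbg habg)
  rw [single_congr habg hg' (by group)] at key
  convert key using 1
  exact (sub_add_sub_cancel _ _ _).symm

private lemma conjTriv_inv {n : ℤ} {a : G} (ha : ConjTriv ξ n a) : ConjTriv ξ n a⁻¹ := by
  intro g hg hg'
  have hg2 : ξ (a⁻¹ * g * a) = n := by rw [hξ, hξ, xi_inv hξ]; omega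
  have hg3 : ξ (a * (a⁻¹ * g * a) * a⁻¹) = n := by rw [xi_conj hξ]; exact hg2
  have key := ha (a⁻¹ * g * a) hg2 hg3
  rw [single_congr hg3 hg (by group), single_congr hg2 hg' (by group)] at key
  have := neg_mem key
  convert this using 1
  exact (neg_sub _ _).symm

private lemma conjTriv_all {n : ℕ} (hn : 0 < n) (t : G) (ht : ξ t = -1) (h : G) :
    ConjTriv ξ (-(n : ℤ)) h := by
  have htS : ConjTriv ξ (-(n : ℤ)) t := conjTriv_base hξ t (by omega) (by omega)
  have key : ∀ (m : ℕ) (h : G), (ξ h).natAbs ≤ m → ConjTriv ξ (-(n : ℤ)) h := by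
    intro m
    induction m with
    | zero =>
      intro h hh
      exact conjTriv_base hξ h (by omega) (by omega)
    | succ m ih =>
      intro h hh
      rcases le_or_gt (ξ h).natAbs m with hle | hlt
      · exact ih h hle
      rcases lt_trichotomy (ξ h) 0 with hneg | hzero | hpos
      · have h1 : (ξ (h * t⁻¹)).natAbs ≤ m := by
          rw [hξ, xi_inv hξ, ht]; omega
        have := conjTriv_mul hξ (ih _ h1) htS
        rwa [show h * t⁻¹ * t = h by group] at this
      · exact conjTriv_base hξ h (by omega) (by omega)
      · have h1 : (ξ (h * t)).natAbs ≤ m := by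
          rw [hξ, ht]; omega
        have := conjTriv_mul hξ (ih _ h1) (conjTriv_inv hξ htS)
        rwa [show h * t * t⁻¹ = h by group] at this
  exact key (ξ h).natAbs h le_rfl

end Aux

/-- Let `ξ : G → ℤ` be an epimorphism, `H = ker ξ`, `t ∈ G` with
`ξ t = -1`. For `n > 0`, in the degree-`n` part `Pₙ ≅ ℚ·ξ⁻¹(-n)` of `P = (ℚH)_ρ[[t]]`
(with `ρ(x) = t⁻¹xt`), the subspace `Pₙ'` spanned by commutators of complementary
nonnegative degrees coincides with the subspace spanned by differences of conjugate
elements (which is its Laurent analogue `Rₙ'`); hence there is a natural isomorphism of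
ℚ-vector spaces `P̄ₙ = Pₙ/Pₙ' ≅ ℚΓ₋ₙ`, the space freely spanned by the conjugacy
classes of `G` lying in `ξ⁻¹(-n)`. -/
theorem stmt_6 {G : Type*} [Group G] (ξ : G → ℤ)
    (hξ : ∀ a b : G, ξ (a * b) = ξ a + ξ b) (hsurj : Function.Surjective ξ)
    (t : G) (ht : ξ t = -1) (n : ℕ) (hn : 0 < n) :
    commSpan ξ (-(n : ℤ)) = conjSpan ξ (-(n : ℤ)) ∧
    Nonempty ((degPart ξ (-(n : ℤ)) ⧸ commSpan ξ (-(n : ℤ))) ≃ₗ[ℚ]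
      (degPart ξ (-(n : ℤ)) ⧸ conjSpan ξ (-(n : ℤ)))) := by
  have heq : commSpan ξ (-(n : ℤ)) = conjSpan ξ (-(n : ℤ)) := by
    apply le_antisymm
    · rw [commSpan]
      apply Submodule.span_le.2
      rintro v ⟨g₁, g₂, h1, h2, _, _, _, rfl⟩
      apply Submodule.subset_span
      have hconj : ξ (g₂ * (g₁ * g₂) * g₂⁻¹) = -(n : ℤ) := by
        rw [xi_conj hξ]; exact h1
      exact ⟨g₁ * g₂, g₂, h1, hconj, by
        rw [single_congr hconj h2 (by group)]⟩
    · rw [conjSpan]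
      apply Submodule.span_le.2
      rintro v ⟨g, h, hg, hg', rfl⟩
      exact conjTriv_all hξ hn t ht h g hg hg'
  exact ⟨heq, ⟨heq ▸ LinearEquiv.refl _ _⟩⟩
end

section
/- Let G be a group, ξ : G → ℤ an epimorphism, H = ker ξ, t ∈ G with ξ(t) = -1, A = ℚH, ρ(x) = t⁻¹xt, P = A_ρ[[t]]. The conjugation automorphism ρ extends to P by ρ(Σaᵢtⁱ) = Σρ(aᵢ)tⁱ, preserves P', and the induced map ρ̄ₙ : P̄ₙ → P̄ₙ on the degree-n part of P̄ = P/P' is the identity for every n > 0. -/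
/-- With `ξ : G → ℤ` an epimorphism, `H = ker ξ`, `t ∈ G`, `ξ t = -1`,
`A = ℚH`, `ρ(x) = t⁻¹xt`, the conjugation automorphism `ρ` extends to `P = A_ρ[[t]]`
coefficientwise; on the degree part `Pₙ ≅ ℚ·ξ⁻¹(m)` it is induced by `g ↦ t⁻¹gt`.
This map preserves `P'` (each `Pₘ'`), and for degrees `m = -n` with `n > 0` the induced
map `ρ̄ₙ : P̄ₙ → P̄ₙ` is the identity: `g - t⁻¹gt ∈ Pₙ'`. -/
theorem stmt_7 {G : Type*} [Group G] (ξ : G → ℤ)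
    (hξ : ∀ a b : G, ξ (a * b) = ξ a + ξ b) (hsurj : Function.Surjective ξ)
    (t : G) (ht : ξ t = -1) :
    (∀ (m : ℤ) (σ : {g : G // ξ g = m} → {g : G // ξ g = m}),
      (∀ x, (σ x).1 = t⁻¹ * x.1 * t) →
      ∀ v ∈ commSpan ξ m, Finsupp.mapDomain σ v ∈ commSpan ξ m) ∧
    (∀ (n : ℕ), 0 < n → ∀ (g : G) (hg : ξ g = -(n : ℤ)) (hg' : ξ (t⁻¹ * g * t) = -(n : ℤ)),
      Finsupp.single ⟨g, hg⟩ (1 : ℚ) - Finsupp.single ⟨t⁻¹ * g * t, hg'⟩ 1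
        ∈ commSpan ξ (-(n : ℤ))) := by

  have h1 : ξ 1 = 0 := by have := hξ 1 1; simp at this; omega
  have hinv : ∀ a : G, ξ a⁻¹ = -ξ a := by
    intro a; have := hξ a⁻¹ a; simp [h1] at this; omega
  constructor
  · intro m σ hσ v hv
    refine Submodule.span_induction ?_ ?_ ?_ ?_ hv
    · rintro x ⟨g₁, g₂, h, h', hg₁, hg₂, hsum, rfl⟩
      have e1 : ξ (t⁻¹ * g₁ * t * (t⁻¹ * g₂ * t)) = m := by
        simp only [hξ, hinv, ht] at *; omega
      have e2 : ξ (t⁻¹ * g₂ * t * (t⁻¹ * g₁ * t)) = m := by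
        simp only [hξ, hinv, ht] at *; omega
      have key : Finsupp.mapDomain σ (Finsupp.single ⟨g₁ * g₂, h⟩ (1:ℚ) - Finsupp.single ⟨g₂ * g₁, h'⟩ 1)
          = Finsupp.single ⟨t⁻¹ * g₁ * t * (t⁻¹ * g₂ * t), e1⟩ (1:ℚ)
            - Finsupp.single ⟨t⁻¹ * g₂ * t * (t⁻¹ * g₁ * t), e2⟩ 1 := by
        rw [sub_eq_add_neg, ← neg_one_smul ℚ (Finsupp.single (⟨g₂ * g₁, h'⟩ : {g : G // ξ g = m}) (1:ℚ)),
          Finsupp.mapDomain_add, Finsupp.mapDomain_smul, Finsupp.mapDomain_single,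
          Finsupp.mapDomain_single, neg_one_smul, ← sub_eq_add_neg]
        congr 2 <;> · apply Subtype.ext; rw [hσ]; simp [mul_assoc]
      erw [key]
      apply Submodule.subset_span
      refine ⟨t⁻¹ * g₁ * t, t⁻¹ * g₂ * t, e1, e2, ?_, ?_, ?_, rfl⟩ <;>
        · simp only [hξ, hinv, ht] at *; omega
    · erw [Finsupp.mapDomain_zero]; exact (commSpan ξ m).zero_mem
    · intro x y _ _ hx hy
      rw [show Finsupp.mapDomain σ (x + y) = Finsupp.mapDomain σ x + Finsupp.mapDomain σ y from
        Finsupp.mapDomain_add]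
      exact (commSpan ξ m).add_mem hx hy
    · intro c x _ hx
      rw [show Finsupp.mapDomain σ (c • x) = c • Finsupp.mapDomain σ x from
        Finsupp.mapDomain_smul c x]
      exact (commSpan ξ m).smul_mem c hx
  · intro n hn g hg hg'
    have e1 : ξ (t⁻¹ * g * t) = -(n:ℤ) := hg'
    have e2 : ξ (t * (t⁻¹ * g)) = -(n:ℤ) := by simp only [hξ, hinv, ht] at *; omega
    have mem : (Finsupp.single ⟨t⁻¹ * g * t, hg'⟩ (1:ℚ) - Finsupp.single ⟨g, hg⟩ 1 : degPart ξ (-(n:ℤ)))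
        ∈ commSpan ξ (-(n:ℤ)) := by
      apply Submodule.subset_span
      have hA : ξ ((t⁻¹ * g) * t) = -(n:ℤ) := hg'
      have hB : ξ (t * (t⁻¹ * g)) = -(n:ℤ) := e2
      refine ⟨t⁻¹ * g, t, hA, hB, ?_, ?_, ?_, ?_⟩
      · simp only [hξ, hinv, ht] at *; omega
      · omega
      · simp only [hξ, hinv, ht] at *; omega
      · congr 2 <;> apply Subtype.ext <;> simp [mul_assoc]
    have := (commSpan ξ (-(n:ℤ))).neg_mem mem
    erw [neg_sub] at this; exact this
end

section
/- Let G be a group with an epimorphism ξ : G → ℤ, H = ker ξ, and t ∈ G with ξ(t) = -1. Then the map sending Σ_{i ≥ N} tⁱ aᵢ (aᵢ ∈ ℚH, N ∈ ℤ) to the corresponding element of the Novikov ring Λ̂_{ξ,ℚ} is a ring isomorphism from the twisted Laurent series ring (ℚH)_ρ((t)) (with ρ(x) = t⁻¹xt, relation at = tρ(a)) onto Λ̂_{ξ,ℚ}. -/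
noncomputable section

variable {G : Type*} [Group G] [DecidableEq G]

/-- The ξ-degree of a group element, as an integer. -/
def deg (ξ : G →* Multiplicative ℤ) (g : G) : ℤ := Multiplicative.toAdd (ξ g)

/-- The twisting `ρ^j : h ↦ t⁻ʲ h tʲ` on the kernel `H = ker ξ` (so `ρ(x) = t⁻¹xt`). -/
def conjKer (ξ : G →* Multiplicative ℤ) (t : G) (j : ℤ) (h : ξ.ker) : ξ.ker :=
  ⟨t ^ (-j) * (h : G) * t ^ j, by
    have h1 : ξ (h : G) = 1 := h.2
    simp [MonoidHom.mem_ker, map_mul, map_zpow, h1, zpow_neg]⟩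

/-- The twist `ρʲ` extended ℚ-linearly to the group algebra `ℚH`. -/
def rhoPow (ξ : G →* Multiplicative ℤ) (t : G) (j : ℤ) :
    MonoidAlgebra ℚ ↥(ξ.ker) → MonoidAlgebra ℚ ↥(ξ.ker) :=
  fun x => MonoidAlgebra.ofCoeff (Finsupp.mapDomain (conjKer ξ t j) x.coeff)

/-- The multiplication of twisted Laurent series `Σ tⁱ aᵢ` (`aᵢ ∈ ℚH`, `a·t = t·ρ(a)`),
encoded by coefficient sequences `ℤ → ℚH` with finite negative part:
`(fg)ₙ = Σ_j ρʲ(f_{n-j})·g_j`. -/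
def mulL (ξ : G →* Multiplicative ℤ) (t : G)
    (f g : ℤ → MonoidAlgebra ℚ ↥(ξ.ker)) : ℤ → MonoidAlgebra ℚ ↥(ξ.ker) :=
  fun n => ∑ᶠ j : ℤ, rhoPow ξ t j (f (n - j)) * g j

/-- The Laurent series `1`. -/
def oneL (ξ : G →* Multiplicative ℤ) : ℤ → MonoidAlgebra ℚ ↥(ξ.ker) :=
  fun n => if n = 0 then 1 else 0

/-- The map `(ℚH)_ρ((t)) → Λ̂_{ξ,ℚ}`, `Σᵢ tⁱaᵢ ↦ Σ_g (a_{-ξ(g)} (t^{ξ g}·g))·g`: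
the element `g ∈ G` with `ξ g = -i` receives the coefficient of `t^{-i}g ∈ H` in `aᵢ`. -/
def toNov (ξ : G →* Multiplicative ℤ) (t : G) (ht : ξ t = Multiplicative.ofAdd (-1))
    (f : ℤ → MonoidAlgebra ℚ ↥(ξ.ker)) : G → ℚ :=
  fun g => (f (-(deg ξ g))).coeff ⟨t ^ (deg ξ g) * g, by
    refine Multiplicative.toAdd.injective ?_
    simp [map_mul, map_zpow, ht, deg]⟩

/-- The rational Novikov support condition. -/
def NovCondQ (ξ : G →* Multiplicative ℤ) (m : G → ℚ) : Prop :=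
  ∀ C : ℤ, {g : G | m g ≠ 0 ∧ C ≤ deg ξ g}.Finite

/-- Convolution product on the rational Novikov ring `Λ̂_{ξ,ℚ}`. -/
def novMulQ (l m : G → ℚ) : G → ℚ := fun g => ∑ᶠ x : G, l x * m (x⁻¹ * g)

/-- The unit of the Novikov ring. -/
def novOneQ : G → ℚ := fun g => if g = 1 then 1 else 0

set_option linter.unusedSectionVars false

section helpers
variable (ξ : G →* Multiplicative ℤ) (t : G)

lemma deg_mul (a b : G) : deg ξ (a * b) = deg ξ a + deg ξ b := by simp [deg]
lemma deg_ker (h : ξ.ker) : deg ξ (h : G) = 0 := by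
  have h1 : ξ (h : G) = 1 := h.2; simp [deg, h1]
lemma deg_zpow (ht : ξ t = Multiplicative.ofAdd (-1)) (i : ℤ) : deg ξ (t ^ i) = -i := by
  simp [deg, map_zpow, ht]
lemma deg_te (ht : ξ t = Multiplicative.ofAdd (-1)) (i : ℤ) (h : ξ.ker) :
    deg ξ (t ^ i * (h : G)) = -i := by
  rw [deg_mul, deg_zpow ξ t ht, deg_ker, add_zero]
lemma deg_inv (a : G) : deg ξ a⁻¹ = -deg ξ a := by simp [deg]
lemma deg_one : deg ξ (1 : G) = 0 := by simp [deg]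

lemma conjKer_injective (j : ℤ) : Function.Injective (conjKer ξ t j) := by
  intro a b hab
  have h2 : t ^ (-j) * (a : G) * t ^ j = t ^ (-j) * (b : G) * t ^ j :=
    congrArg Subtype.val hab
  exact Subtype.ext (mul_left_cancel (mul_right_cancel h2))

variable (ht : ξ t = Multiplicative.ofAdd (-1))

lemma coeff_eq {a : ℤ → MonoidAlgebra ℚ ↥(ξ.ker)} {i j : ℤ} {x y : ↥(ξ.ker)}
    (h1 : i = j) (h2 : x = y) : (a i).coeff x = (a j).coeff y := by subst h1; subst h2; rfl

lemma toNov_te (f : ℤ → MonoidAlgebra ℚ ↥(ξ.ker)) (i : ℤ) (h : ↥(ξ.ker)) :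
    toNov ξ t ht f (t ^ i * (h : G)) = (f i).coeff h := by
  refine coeff_eq ξ ?_ (Subtype.ext ?_)
  · rw [deg_te ξ t ht]; ring
  · show t ^ (deg ξ (t ^ i * (h:G))) * (t ^ i * (h:G)) = (h : G)
    rw [deg_te ξ t ht]; group

/-- The canonical kernel part of `g`. -/
def kpart (g : G) : ↥(ξ.ker) :=
  ⟨t ^ (deg ξ g) * g, by
    refine Multiplicative.toAdd.injective ?_
    simp [map_mul, map_zpow, ht, deg]⟩

lemma kpart_spec (g : G) : t ^ (-(deg ξ g)) * ((kpart ξ t ht g : G)) = g := by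
  show t ^ (-(deg ξ g)) * (t ^ (deg ξ g) * g) = g
  group

lemma toNov_apply (f : ℤ → MonoidAlgebra ℚ ↥(ξ.ker)) (g : G) :
    toNov ξ t ht f g = (f (-(deg ξ g))).coeff (kpart ξ t ht g) := rfl

end helpers

/-- Let `ξ : G → ℤ` be an epimorphism, `H = ker ξ`, `t ∈ G` with
`ξ t = -1`. The map `Σᵢ tⁱaᵢ ↦ Σ n_g·g` is a ring isomorphism from the twisted Laurent
series ring `(ℚH)_ρ((t))` (`ρ(x) = t⁻¹xt`, `a·t = t·ρ(a)`) onto the rational Novikov ring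
`Λ̂_{ξ,ℚ}`: it is injective on series with finite negative part, its image is exactly the
set of formal sums satisfying the Novikov support condition, and it preserves
multiplication, addition and the unit. -/
theorem stmt_17 (ξ : G →* Multiplicative ℤ) (hsurj : Function.Surjective ξ)
    (t : G) (ht : ξ t = Multiplicative.ofAdd (-1)) :
    (∀ f f' : ℤ → MonoidAlgebra ℚ ↥(ξ.ker),
      (∃ N, ∀ i < N, f i = 0) → (∃ N, ∀ i < N, f' i = 0) →
      toNov ξ t ht f = toNov ξ t ht f' → f = f') ∧
    (∀ m : G → ℚ, NovCondQ ξ m ↔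
      ∃ f : ℤ → MonoidAlgebra ℚ ↥(ξ.ker), (∃ N, ∀ i < N, f i = 0) ∧ toNov ξ t ht f = m) ∧
    (∀ f f' : ℤ → MonoidAlgebra ℚ ↥(ξ.ker),
      (∃ N, ∀ i < N, f i = 0) → (∃ N, ∀ i < N, f' i = 0) →
      toNov ξ t ht (mulL ξ t f f') = novMulQ (toNov ξ t ht f) (toNov ξ t ht f')) ∧
    (∀ f f' : ℤ → MonoidAlgebra ℚ ↥(ξ.ker),
      toNov ξ t ht (fun i => f i + f' i) = fun g => toNov ξ t ht f g + toNov ξ t ht f' g) ∧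
    toNov ξ t ht (oneL ξ) = novOneQ := by
  refine ⟨?_, ?_, ?_, ?_, ?_⟩
  · -- injectivity
    intro f f' _ _ heq
    funext i
    ext h
    have := congrFun heq (t ^ i * (h : G))
    rwa [toNov_te, toNov_te] at this
  · -- characterization of the image
    intro m
    constructor
    · intro hm
      have hfin : ∀ i : ℤ,
          (Function.support fun h : ↥(ξ.ker) => m (t ^ i * (h : G))).Finite := by
        intro i
        have : (Function.support fun h : ↥(ξ.ker) => m (t ^ i * (h : G))) ⊆
            (fun h : ↥(ξ.ker) => t ^ i * (h : G)) ⁻¹'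
              {g : G | m g ≠ 0 ∧ -i ≤ deg ξ g} := by
          intro h hh
          refine ⟨hh, ?_⟩
          rw [deg_te ξ t ht]
        refine Set.Finite.subset (Set.Finite.preimage ?_ (hm (-i))) this
        intro a _ b _ hab
        exact Subtype.ext (mul_left_cancel hab)
      set F : ℤ → MonoidAlgebra ℚ ↥(ξ.ker) := fun i =>
        MonoidAlgebra.ofCoeff (Finsupp.ofSupportFinite (fun h : ↥(ξ.ker) => m (t ^ i * (h : G))) (hfin i)) with hF
      have hFapp : ∀ i h, (F i).coeff h = m (t ^ i * (h : G)) := fun i h => rfl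
      refine ⟨F, ?_, ?_⟩
      · -- bounded below
        obtain ⟨D, hD⟩ := (Set.Finite.image (deg ξ) (hm 1)).bddAbove
        refine ⟨-(max D 0), fun i hi => ?_⟩
        ext h
        rw [hFapp]
        by_contra hne
        have hmem : (t ^ i * (h : G)) ∈ {g : G | m g ≠ 0 ∧ 1 ≤ deg ξ g} := by
          refine ⟨hne, ?_⟩
          rw [deg_te ξ t ht]
          have : i < -(max D 0) := hi
          omega
        have := hD (Set.mem_image_of_mem (deg ξ) hmem)
        rw [deg_te ξ t ht] at this
        have h0 : D ≤ max D 0 := le_max_left _ _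
        omega
      · funext g
        rw [toNov_apply, hFapp, kpart_spec]
    · rintro ⟨f, ⟨N, hN⟩, rfl⟩
      intro C
      have hsub : {g : G | toNov ξ t ht f g ≠ 0 ∧ C ≤ deg ξ g} ⊆
          ↑((Finset.Icc N (-C)).biUnion fun i =>
            (f i).coeff.support.image fun k : ↥(ξ.ker) => t ^ i * (k : G)) := by
        rintro g ⟨hg, hC⟩
        rw [toNov_apply] at hg
        simp only [Finset.coe_biUnion, Set.mem_iUnion, Finset.mem_coe,
          Finset.mem_Icc, Finset.mem_image]
        refine ⟨-(deg ξ g), ?_, ⟨kpart ξ t ht g, ?_, kpart_spec ξ t ht g⟩⟩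
        · constructor
          · by_contra hlt
            push_neg at hlt
            rw [hN _ hlt] at hg
            exact hg rfl
          · omega
        · exact Finsupp.mem_support_iff.2 hg
      exact Set.Finite.subset (Finset.finite_toSet _) hsub
  · -- multiplicativity
    intro f f' ⟨N, hN⟩ ⟨N', hN'⟩
    funext g
    set n : ℤ := -(deg ξ g) with hn
    set h : ↥(ξ.ker) := kpart ξ t ht g with hh
    have hLHS : toNov ξ t ht (mulL ξ t f f') g = (mulL ξ t f f' n).coeff h := rfl
    set T : ℤ → MonoidAlgebra ℚ ↥(ξ.ker) := fun j => rhoPow ξ t j (f (n - j)) * f' j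
      with hT
    set S : Finset ℤ := Finset.Icc N' (n - N) with hS
    have hTsupp : Function.support T ⊆ ↑S := by
      intro j hj
      rw [hS]
      simp only [Finset.coe_Icc, Set.mem_Icc]
      constructor
      · by_contra hlt
        push_neg at hlt
        apply hj
        show rhoPow ξ t j (f (n - j)) * f' j = 0
        rw [hN' _ hlt, mul_zero]
      · by_contra hlt
        push_neg at hlt
        apply hj
        have hnj : n - j < N := by omega
        show rhoPow ξ t j (f (n - j)) * f' j = 0
        rw [hN _ hnj]
        simp [rhoPow]
    have hmul : mulL ξ t f f' n = ∑ j ∈ S, T j :=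
      finsum_eq_finset_sum_of_support_subset T hTsupp
    -- term computation
    have hterm : ∀ j, (T j).coeff h = ∑ k ∈ (f (n - j)).coeff.support,
        (f (n - j)).coeff k * toNov ξ t ht f' ((t ^ (n - j) * (k : G))⁻¹ * g) := by
      intro j
      rw [hT]
      rw [MonoidAlgebra.coeff_mul_apply_left]
      show ((Finsupp.mapDomain (conjKer ξ t j) (f (n-j)).coeff).sum
        fun a b => b * (f' j).coeff (a⁻¹ * h)) = _
      rw [Finsupp.sum_mapDomain_index (h := fun a b => b * (f' j).coeff (a⁻¹ * h))
        (fun b => zero_mul _) (fun b m₁ m₂ => add_mul _ _ _)]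
      rw [Finsupp.sum]
      refine Finset.sum_congr rfl fun k _ => ?_
      have harg : (t ^ (n - j) * (k : G))⁻¹ * g =
          t ^ j * (((conjKer ξ t j k)⁻¹ * h : ↥(ξ.ker)) : G) := by
        show _ = t ^ j * ((t ^ (-j) * (k:G) * t ^ j)⁻¹ * (t ^ (deg ξ g) * g))
        have hdeg : deg ξ g = -n := by omega
        rw [hdeg]
        group
      rw [harg, toNov_te]
    -- RHS
    have hA : Function.support
        (fun x : G => toNov ξ t ht f x * toNov ξ t ht f' (x⁻¹ * g)) ⊆
        ↑(S.biUnion fun j => (f (n - j)).coeff.support.image fun k : ↥(ξ.ker) => t ^ (n - j) * (k : G)) := by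
      intro x hx
      have hx1 : toNov ξ t ht f x ≠ 0 := fun h0 => hx (by simp [h0])
      have hx2 : toNov ξ t ht f' (x⁻¹ * g) ≠ 0 := fun h0 => hx (by simp [h0])
      rw [toNov_apply] at hx1 hx2
      simp only [Finset.coe_biUnion, Set.mem_iUnion, Finset.mem_coe,
        Finset.mem_Icc, Finset.mem_image]
      set m : ℤ := -(deg ξ x) with hm
      have hmN : N ≤ m := by
        by_contra hlt
        push_neg at hlt
        rw [hN _ hlt] at hx1
        exact hx1 rfl
      have hdxg : -(deg ξ (x⁻¹ * g)) = n - m := by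
        rw [deg_mul, deg_inv]; omega
      have hmN' : N' ≤ n - m := by
        by_contra hlt
        push_neg at hlt
        rw [hdxg, hN' _ hlt] at hx2
        exact hx2 rfl
      refine ⟨n - m, ?_, ⟨kpart ξ t ht x, Finsupp.mem_support_iff.2 ?_, ?_⟩⟩
      · rw [hS, Finset.mem_Icc]
        constructor <;> omega
      · have : n - (n - m) = m := by omega
        rw [this]
        exact hx1
      · have : n - (n - m) = m := by omega
        rw [this]
        exact kpart_spec ξ t ht x
    have hRHS : novMulQ (toNov ξ t ht f) (toNov ξ t ht f') g =
        ∑ x ∈ (S.biUnion fun j => (f (n - j)).coeff.support.image fun k : ↥(ξ.ker) => t ^ (n - j) * (k : G)),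
          toNov ξ t ht f x * toNov ξ t ht f' (x⁻¹ * g) :=
      finsum_eq_finset_sum_of_support_subset _ hA
    rw [hLHS, hmul, MonoidAlgebra.coeff_sum, Finsupp.finset_sum_apply, hRHS]
    rw [Finset.sum_biUnion ?disj]
    case disj =>
      intro j₁ h₁ j₂ h₂ hne
      simp only [Finset.disjoint_left, Finset.mem_image]
      rintro x ⟨k₁, _, rfl⟩ ⟨k₂, _, hx⟩
      have := congrArg (deg ξ) hx
      rw [deg_te ξ t ht, deg_te ξ t ht] at this
      exact hne (by omega)
    refine Finset.sum_congr rfl fun j hj => ?_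
    rw [hterm j, Finset.sum_image ?inj]
    case inj =>
      intro a _ b _ hab
      exact Subtype.ext (mul_left_cancel hab)
    refine Finset.sum_congr rfl fun k _ => ?_
    congr 1
    rw [toNov_te]
  · -- additivity
    intro f f'
    funext g
    simp only [toNov_apply]
    rw [MonoidAlgebra.coeff_add]
    exact Finsupp.add_apply _ _ _
  · -- unit
    funext g
    rw [toNov_apply, novOneQ, oneL]
    by_cases hg : g = 1
    · subst hg
      rw [if_pos rfl, if_pos (by rw [deg_one]; ring)]
      have hk : kpart ξ t ht (1 : G) = 1 := by
        refine Subtype.ext ?_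
        show t ^ (deg ξ (1 : G)) * 1 = 1
        rw [deg_one]; group
      rw [hk]
      simp [MonoidAlgebra.one_def]
    · rw [if_neg hg]
      by_cases hd : -(deg ξ g) = 0
      · rw [if_pos hd]
        have hk : (kpart ξ t ht g : G) = g := by
          show t ^ (deg ξ g) * g = g
          have : deg ξ g = 0 := by omega
          rw [this]; group
        rw [MonoidAlgebra.one_def, MonoidAlgebra.coeff_single, Finsupp.single_apply, if_neg]
        intro h1
        apply hg
        rw [← hk, ← h1]
        rfl
      · rw [if_neg hd]
        rfl
end
end
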